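/- Let κ ∈ ℂ, y ∈ ℝ³, and let c = (1,1,1) ∈ ℝ³. Define the magnetic dipole field E : ℝ³ \ {y} → ℂ³ by E(x) = ∇ × ( (e^{iκ‖x−y‖}/‖x−y‖) · c ). Then on ℝ³ \ {y}, E satisfies the homogeneous time-harmonic Maxwell equation ∇ × (∇ × E)(x) = κ² E(x) for all x ≠ y. -/

import Mathlib

/-- The partial derivative `∂ᵢw(x)` of a complex-valued function on Euclidean `ℝ³`. -/
noncomputable def pdC (w : EuclideanSpace ℝ (Fin 3) → ℂ) (i : Fin 3)
    (x : EuclideanSpace ℝ (Fin 3)) : ℂ :=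
  fderiv ℝ w x (EuclideanSpace.single i 1)

/-- The curl `∇×w = (∂₂w₃ − ∂₃w₂, ∂₃w₁ − ∂₁w₃, ∂₁w₂ − ∂₂w₁)` of a complex
vector field on `ℝ³`. -/
noncomputable def curlC (w : EuclideanSpace ℝ (Fin 3) → Fin 3 → ℂ)
    (x : EuclideanSpace ℝ (Fin 3)) : Fin 3 → ℂ :=
  ![pdC (fun y => w y 2) 1 x - pdC (fun y => w y 1) 2 x,
    pdC (fun y => w y 0) 2 x - pdC (fun y => w y 2) 0 x,
    pdC (fun y => w y 1) 0 x - pdC (fun y => w y 0) 1 x]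

/-! With `u` the Helmholtz kernel `e^{iκ‖x−y‖}/‖x−y‖` and `A = u • (1,1,1)`, the identity
`∇×∇×A = ∇(∇·A) − ΔA` and the Helmholtz equation `Δu = −κ²u` off `y` give
`∇×E = ∇(∇·A) + κ²A` near every `x ≠ y`. Taking the curl again, `∇×∇ = 0` leaves
`∇×∇×E = κ² ∇×A = κ²E`. The Helmholtz equation is checked on the profile
`φ(t) = e^{iκ√t}/√t` of `u` in `t = ‖x−y‖²`, for which
`Δ(φ(‖x−y‖²)) = 4tφ''(t) + 6φ'(t)`. -/

open Topology

local notation "ℝ³" => EuclideanSpace ℝ (Fin 3)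

noncomputable section

section PartialDeriv

variable {f g : ℝ³ → ℂ} {x : ℝ³}

theorem HasFDerivAt.pdC_eq {L : ℝ³ →L[ℝ] ℂ} (h : HasFDerivAt f L x) (i : Fin 3) :
    pdC f i x = L (EuclideanSpace.single i 1) := by
  rw [pdC, h.fderiv]

theorem pdC_congr_of_eventuallyEq (h : f =ᶠ[𝓝 x] g) (i : Fin 3) : pdC f i x = pdC g i x := by
  rw [pdC, pdC, h.fderiv_eq]

theorem pdC_add (hf : DifferentiableAt ℝ f x) (hg : DifferentiableAt ℝ g x) (i : Fin 3) :
    pdC (fun z => f z + g z) i x = pdC f i x + pdC g i x := by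
  rw [pdC, fderiv_fun_add hf hg]; rfl

theorem pdC_sub (hf : DifferentiableAt ℝ f x) (hg : DifferentiableAt ℝ g x) (i : Fin 3) :
    pdC (fun z => f z - g z) i x = pdC f i x - pdC g i x := by
  rw [pdC, fderiv_fun_sub hf hg]; rfl

theorem pdC_mul (hf : DifferentiableAt ℝ f x) (hg : DifferentiableAt ℝ g x) (i : Fin 3) :
    pdC (fun z => f z * g z) i x = pdC f i x * g x + f x * pdC g i x := by
  rw [pdC, fderiv_fun_mul hf hg]
  simp only [add_apply, smul_apply, smul_eq_mul, pdC]
  ring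

theorem pdC_const_mul (c : ℂ) (i : Fin 3) : pdC (fun z => c * f z) i x = c * pdC f i x := by
  change fderiv ℝ (c • f) x _ = _
  rw [fderiv_const_smul_field]; rfl

theorem ContDiffAt.pdC {m n : WithTop ℕ∞} (hf : ContDiffAt ℝ n f x) (hmn : m + 1 ≤ n)
    (i : Fin 3) : ContDiffAt ℝ m (pdC f i) x :=
  (hf.fderiv_right hmn).clm_apply contDiffAt_const

theorem pdC_pdC_comm (hf : ContDiffAt ℝ 2 f x) (i j : Fin 3) :
    pdC (pdC f i) j x = pdC (pdC f j) i x := by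
  have hdiff : DifferentiableAt ℝ (fderiv ℝ f) x :=
    (hf.fderiv_right (m := 1) le_rfl).differentiableAt one_ne_zero
  have hsymm := hf.isSymmSndFDerivAt (by simp)
  change fderiv ℝ (fun z => fderiv ℝ f z _) x _ = fderiv ℝ (fun z => fderiv ℝ f z _) x _
  rw [fderiv_clm_apply hdiff (differentiableAt_const _),
    fderiv_clm_apply hdiff (differentiableAt_const _)]
  simp [hsymm (EuclideanSpace.single j 1)]

end PartialDeriv

section VectorCalculus

def gradC (f : ℝ³ → ℂ) (x : ℝ³) : Fin 3 → ℂ := fun i => pdC f i x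

def divC (F : ℝ³ → Fin 3 → ℂ) (x : ℝ³) : ℂ :=
  pdC (F · 0) 0 x + pdC (F · 1) 1 x + pdC (F · 2) 2 x

def laplacianC (f : ℝ³ → ℂ) (x : ℝ³) : ℂ := ∑ i, pdC (pdC f i) i x

variable {F G : ℝ³ → Fin 3 → ℂ} {f : ℝ³ → ℂ} {x : ℝ³}

theorem ContDiffAt.divC {m n : WithTop ℕ∞} (hF : ∀ i, ContDiffAt ℝ n (F · i) x)
    (hmn : m + 1 ≤ n) : ContDiffAt ℝ m (divC F) x :=
  (((hF 0).pdC hmn 0).add ((hF 1).pdC hmn 1)).add ((hF 2).pdC hmn 2)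

theorem curlC_congr_of_eventuallyEq (h : F =ᶠ[𝓝 x] G) : curlC F x = curlC G x := by
  have hc (i : Fin 3) : (F · i) =ᶠ[𝓝 x] (G · i) := h.mono fun z hz => congrFun hz i
  simp only [curlC, pdC_congr_of_eventuallyEq (hc _)]

theorem curlC_add (hF : ∀ i, DifferentiableAt ℝ (F · i) x)
    (hG : ∀ i, DifferentiableAt ℝ (G · i) x) : curlC (F + G) x = curlC F x + curlC G x := by
  ext k; fin_cases k <;>
    simp only [curlC, Pi.add_apply, pdC_add (hF _) (hG _), Fin.zero_eta, Fin.mk_one,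
      Fin.reduceFinMk, Matrix.cons_val] <;> ring

theorem curlC_const_smul (c : ℂ) : curlC (c • F) x = c • curlC F x := by
  ext k; fin_cases k <;>
    simp only [curlC, Pi.smul_apply, smul_eq_mul, pdC_const_mul, Fin.zero_eta, Fin.mk_one,
      Fin.reduceFinMk, Matrix.cons_val] <;> ring

theorem curlC_gradC (hf : ContDiffAt ℝ 2 f x) : curlC (gradC f) x = 0 := by
  ext k; fin_cases k <;>
    simp [curlC, gradC, pdC_pdC_comm hf 2 1, pdC_pdC_comm hf 0 2, pdC_pdC_comm hf 1 0]

theorem curlC_curlC (hF : ∀ i, ContDiffAt ℝ 2 (F · i) x) :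
    curlC (curlC F) x = gradC (divC F) x - fun i => laplacianC (F · i) x := by
  have hd (i j : Fin 3) : DifferentiableAt ℝ (pdC (F · i) j) x :=
    ((hF i).pdC (m := 1) le_rfl j).differentiableAt one_ne_zero
  have hdiv (i : Fin 3) : pdC (divC F) i x =
      pdC (pdC (F · 0) 0) i x + pdC (pdC (F · 1) 1) i x + pdC (pdC (F · 2) 2) i x := by
    unfold divC
    rw [pdC_add ((hd 0 0).fun_add (hd 1 1)) (hd 2 2), pdC_add (hd 0 0) (hd 1 1)]
  ext k; fin_cases k <;>
    simp only [curlC, gradC, laplacianC, Fin.sum_univ_three, hdiv, pdC_sub (hd _ _) (hd _ _),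
      Pi.sub_apply, Fin.zero_eta, Fin.mk_one, Fin.reduceFinMk, Matrix.cons_val]
  · linear_combination pdC_pdC_comm (hF 1) 0 1 + pdC_pdC_comm (hF 2) 0 2
  · linear_combination pdC_pdC_comm (hF 0) 1 0 + pdC_pdC_comm (hF 2) 1 2
  · linear_combination pdC_pdC_comm (hF 0) 2 0 + pdC_pdC_comm (hF 1) 2 1

end VectorCalculus

section HelmholtzProfile

open Complex

def helmholtzProfile (κ : ℂ) (t : ℝ) : ℂ := exp (I * κ * √t) / √t

def helmholtzProfileDeriv (κ : ℂ) (t : ℝ) : ℂ :=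
  exp (I * κ * √t) * (I * κ * √t - 1) / (2 * (√t : ℂ) ^ 3)

def helmholtzProfileDeriv2 (κ : ℂ) (t : ℝ) : ℂ :=
  exp (I * κ * √t) * (-κ ^ 2 * t - 3 * I * κ * √t + 3) / (4 * (√t : ℂ) ^ 5)

variable {κ : ℂ} {t : ℝ}

theorem ofReal_sqrt_ne_zero (ht : 0 < t) : (√t : ℂ) ≠ 0 :=
  ofReal_ne_zero.2 (Real.sqrt_pos.2 ht).ne'

theorem ofReal_sqrt_sq (ht : 0 < t) : (√t : ℂ) ^ 2 = t := by
  norm_cast; exact Real.sq_sqrt ht.le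

theorem hasDerivAt_ofReal_sqrt (ht : 0 < t) :
    HasDerivAt (fun s : ℝ => (√s : ℂ)) (1 / (2 * √t)) t := by
  simpa using (Real.hasDerivAt_sqrt ht.ne').ofReal_comp

theorem hasDerivAt_helmholtzProfile (ht : 0 < t) :
    HasDerivAt (helmholtzProfile κ) (helmholtzProfileDeriv κ t) t := by
  have hS := hasDerivAt_ofReal_sqrt ht
  have hne := ofReal_sqrt_ne_zero ht
  refine (((hS.const_mul (I * κ)).cexp).div hS hne).congr_deriv ?_
  simp only [helmholtzProfileDeriv]
  field_simp

theorem hasDerivAt_helmholtzProfileDeriv (ht : 0 < t) :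
    HasDerivAt (helmholtzProfileDeriv κ) (helmholtzProfileDeriv2 κ t) t := by
  have hS := hasDerivAt_ofReal_sqrt ht
  have hne := ofReal_sqrt_ne_zero ht
  have hsq := ofReal_sqrt_sq ht
  refine ((((hS.const_mul (I * κ)).cexp).mul ((hS.const_mul (I * κ)).sub_const 1)).div
    ((hS.pow 3).const_mul 2) (by simp [hne])).congr_deriv ?_
  simp only [helmholtzProfileDeriv2, Pi.mul_apply, Pi.pow_apply]
  field_simp
  linear_combination (4 * κ ^ 2 * (√t : ℂ) ^ 4) * I_sq - (4 * κ ^ 2 * (√t : ℂ) ^ 2) * hsq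

theorem helmholtzProfile_ode (ht : 0 < t) :
    4 * t * helmholtzProfileDeriv2 κ t + 6 * helmholtzProfileDeriv κ t
      + κ ^ 2 * helmholtzProfile κ t = 0 := by
  have hne := ofReal_sqrt_ne_zero ht
  have hsq := ofReal_sqrt_sq ht
  simp only [helmholtzProfile, helmholtzProfileDeriv, helmholtzProfileDeriv2, ← hsq]
  field_simp
  ring

end HelmholtzProfile

section RadialLaplacian

theorem hasFDerivAt_normSq_sub (y x : ℝ³) :
    HasFDerivAt (fun z => ‖z - y‖ ^ 2) (2 • innerSL ℝ (x - y)) x := by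
  simpa using ((hasFDerivAt_id x).sub_const y).norm_sq

variable {y x : ℝ³}

theorem pdC_comp_normSq_sub {φ : ℝ → ℂ} {φ' : ℂ} (hφ : HasDerivAt φ φ' (‖x - y‖ ^ 2))
    (i : Fin 3) : pdC (fun z => φ (‖z - y‖ ^ 2)) i x = 2 * (x i - y i : ℝ) * φ' := by
  rw [HasFDerivAt.pdC_eq (f := fun z => φ (‖z - y‖ ^ 2))
    (hφ.hasFDerivAt.comp x (hasFDerivAt_normSq_sub y x))]
  simp [EuclideanSpace.inner_single_right, sub_mul, mul_assoc]

theorem pdC_ofReal_coord_sub (i : Fin 3) : pdC (fun z => ((z i - y i : ℝ) : ℂ)) i x = 1 := by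
  rw [HasFDerivAt.pdC_eq (f := fun z => ((z i - y i : ℝ) : ℂ))
    (Complex.ofRealCLM.hasFDerivAt.comp x
      ((EuclideanSpace.proj (𝕜 := ℝ) i).hasFDerivAt.sub_const (y i) :))]
  simp

theorem laplacianC_comp_normSq_sub {φ φ' : ℝ → ℂ} {φ'' : ℂ}
    (hφ : ∀ᶠ t in 𝓝 (‖x - y‖ ^ 2), HasDerivAt φ (φ' t) t)
    (hφ' : HasDerivAt φ' φ'' (‖x - y‖ ^ 2)) :
    laplacianC (fun z => φ (‖z - y‖ ^ 2)) x
      = 4 * ‖x - y‖ ^ 2 * φ'' + 6 * φ' (‖x - y‖ ^ 2) := by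
  have hq : Continuous fun z : ℝ³ => ‖z - y‖ ^ 2 := by fun_prop
  have hpd (i : Fin 3) : pdC (fun z => φ (‖z - y‖ ^ 2)) i
      =ᶠ[𝓝 x] fun z => 2 * ((z i - y i : ℝ) : ℂ) * φ' (‖z - y‖ ^ 2) :=
    (hq.tendsto x).eventually hφ |>.mono fun z hz => pdC_comp_normSq_sub hz i
  have hpdpd (i : Fin 3) : pdC (pdC (fun z => φ (‖z - y‖ ^ 2)) i) i x
      = 2 * φ' (‖x - y‖ ^ 2) + 4 * ((x i - y i : ℝ) : ℂ) ^ 2 * φ'' := by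
    rw [pdC_congr_of_eventuallyEq (hpd i),
      pdC_mul (f := fun z => 2 * ((z i - y i : ℝ) : ℂ)) (g := fun z => φ' (‖z - y‖ ^ 2))
        (by fun_prop) (hφ'.hasFDerivAt.comp x (hasFDerivAt_normSq_sub y x)).differentiableAt,
      pdC_const_mul, pdC_ofReal_coord_sub, pdC_comp_normSq_sub hφ']
    ring
  have hnorm : (‖x - y‖ : ℂ) ^ 2 = ∑ i, ((x i - y i : ℝ) : ℂ) ^ 2 := by
    exact_mod_cast EuclideanSpace.real_norm_sq_eq (x - y)
  rw [laplacianC, hnorm, Fin.sum_univ_three, Fin.sum_univ_three, hpdpd, hpdpd, hpdpd]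
  ring

end RadialLaplacian

section HelmholtzKernel

open Complex

def helmholtzKernel (κ : ℂ) (y z : ℝ³) : ℂ := exp (I * κ * ‖z - y‖) / ‖z - y‖

variable {κ : ℂ} {y x : ℝ³}

theorem helmholtzKernel_eq_helmholtzProfile (κ : ℂ) (y : ℝ³) :
    helmholtzKernel κ y = fun z => helmholtzProfile κ (‖z - y‖ ^ 2) := by
  funext z
  simp only [helmholtzKernel, helmholtzProfile, Real.sqrt_sq (norm_nonneg _)]

theorem contDiffAt_helmholtzKernel {n : WithTop ℕ∞} (hx : x ≠ y) :
    ContDiffAt ℝ n (helmholtzKernel κ y) x := by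
  have hr : ContDiffAt ℝ n (fun z : ℝ³ => (‖z - y‖ : ℂ)) x :=
    ofRealCLM.contDiff.contDiffAt.comp x
      ((contDiffAt_norm ℝ (sub_ne_zero.2 hx)).comp x (contDiffAt_id.sub contDiffAt_const))
  have hr0 : (‖x - y‖ : ℂ) ≠ 0 := by simpa [sub_eq_zero] using hx
  unfold helmholtzKernel
  simp only [div_eq_mul_inv]
  exact (contDiffAt_const.mul hr).cexp.mul (hr.inv hr0)

theorem laplacianC_helmholtzKernel (hx : x ≠ y) :
    laplacianC (helmholtzKernel κ y) x = -κ ^ 2 * helmholtzKernel κ y x := by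
  have hq : 0 < ‖x - y‖ ^ 2 := pow_pos (norm_pos_iff.2 (sub_ne_zero.2 hx)) 2
  rw [helmholtzKernel_eq_helmholtzProfile, laplacianC_comp_normSq_sub
    ((lt_mem_nhds hq).mono fun t ht => hasDerivAt_helmholtzProfile ht)
    (hasDerivAt_helmholtzProfileDeriv hq)]
  have hradial := helmholtzProfile_ode (κ := κ) hq
  push_cast at hradial ⊢
  linear_combination hradial

end HelmholtzKernel

end

/-- The magnetic dipole field `E = ∇ × (e^{iκ‖x−y‖}/‖x−y‖ · (1,1,1))` satisfies
`∇ × (∇ × E) = κ² E` away from the dipole point `y`. -/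
theorem stmt15 (κ : ℂ) (y : EuclideanSpace ℝ (Fin 3))
    (A : EuclideanSpace ℝ (Fin 3) → Fin 3 → ℂ)
    (hA : ∀ x i, A x i = Complex.exp (Complex.I * κ * ‖x - y‖) / (‖x - y‖ : ℂ))
    (E : EuclideanSpace ℝ (Fin 3) → Fin 3 → ℂ)
    (hE : ∀ x, E x = curlC A x) :
    ∀ x : EuclideanSpace ℝ (Fin 3), x ≠ y → curlC (curlC E) x = κ ^ 2 • E x := by
  intro x hx
  have hAk : ∀ z i, A z i = helmholtzKernel κ y z := hA
  have hAi (i : Fin 3) : (A · i) = helmholtzKernel κ y := funext fun z => hAk z i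
  have hA_smooth {n : WithTop ℕ∞} {z : ℝ³} (hz : z ≠ y) (i : Fin 3) :
      ContDiffAt ℝ n (A · i) z :=
    hAi i ▸ contDiffAt_helmholtzKernel hz
  have hcurlA : curlC (curlC A) =ᶠ[𝓝 x] gradC (divC A) + κ ^ 2 • A := by
    filter_upwards [isOpen_ne.mem_nhds hx] with z hz
    rw [curlC_curlC (hA_smooth hz)]
    ext i
    simp only [Pi.sub_apply, Pi.add_apply, Pi.smul_apply, smul_eq_mul, hAk,
      laplacianC_helmholtzKernel hz]
    ring
  have hdivA : ContDiffAt ℝ 2 (divC A) x := ContDiffAt.divC (hA_smooth hx) le_rfl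
  rw [funext hE, curlC_congr_of_eventuallyEq hcurlA,
    curlC_add (F := gradC (divC A)) (G := κ ^ 2 • A)
      (fun i => (hdivA.pdC le_rfl i).differentiableAt one_ne_zero)
      (fun i => ((hA_smooth hx i).differentiableAt one_ne_zero).const_smul (κ ^ 2)),
    curlC_const_smul, curlC_gradC hdivA, zero_add]
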